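/- In the deformation setting, let Ω¹ be the free A-module with basis θ^k (k ∈ Fin n), regarded as a module with Leibniz operators via ∇_j(θ^i) = −Γ^i_{jk} θ^k for given elements Γ^i_{jk} ∈ A, and set d(a) := δ_k(a) θ^k. Assume the derivations commute pairwise (δ_i ∘ δ_j = δ_j ∘ δ_i) and the Poisson-compatibility condition δ_m(ω^{ij}) + ω^{kj} Γ^i_{km} + ω^{ik} Γ^j_{km} = 0 holds for all i, j, m. Let E be a module with Leibniz operators and define ∇_{Q(E)} : E₁ → Ω¹₁ ⊗_{A₁} E₁ by ∇_{Q(E)}(e) := q⁻¹(θ^k ⊗ ∇_{E,k}(e)) − (λ/2) ω^{ij} θ^k ⊗ [∇_{E,k}, ∇_{E,j}] ∇_{E,i}(e), extended λ-linearly, where q = q_{Ω¹,E}. Then: (i) ∇_{Q(E)}(a • e) = d(a) ⊗ e + a • ∇_{Q(E)}(e) for all a ∈ A₁ and e ∈ E₁ (left Leibniz rule over A₁); (ii) the formula σ_{Q(E)}(e ⊗ ξ) := ξ ⊗ e + λ ω^{ij} ∇_j(ξ) ⊗ ∇_{E,i}(e) + λ ω^{ij} ξ_j θ^k ⊗ [∇_{E,k},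 ∇_{E,i}](e), for ξ = ξ_j θ^j with ξ_j ∈ A, defines an A₁-bimodule map σ_{Q(E)} : E₁ ⊗_{A₁} Ω¹₁ → Ω¹₁ ⊗_{A₁} E₁ satisfying ∇_{Q(E)}(e • a) = ∇_{Q(E)}(e) • a + σ_{Q(E)}(e ⊗ d(a)). -/

import Mathlib

/-!
Identify `Ω¹ ⊗_A M` with `Fin n → M` through the basis `θ^k` and compare the two sides of each
identity coefficientwise, in the `λ⁰` and the `λ¹` component. In these coordinates the Leibniz
operators of `Ω¹ ⊗_A E` act by `∇_j(z)_m = ∇_j(z_m) − Γ^k_{jm} z_k`. Commuting derivations make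
the curvature `[∇_k, ∇_j]` `A`-linear, and the antisymmetry of `ω` shows that `σ_{Q(E)}` is `q`
with `λ` replaced by `−λ`, plus the curvature term; after that the bimodule identities need at
most one further use of the antisymmetry of `ω`. In the two Leibniz rules what is left over is
`½ (δ_m ω^{ij} + ω^{kj} Γ^i_{km} + ω^{ik} Γ^j_{km}) δ_i(a) ∇_j(e)`, which vanishes by Poisson
compatibility.
-/

open scoped TensorProduct

namespace Stmt5

/-- The semiclassical data: derivations `δ_i` and an antisymmetric `ω^{ij}` with
entries in a commutative algebra `A` over a field `K` of characteristic zero. -/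
structure DefData (K A : Type) [Field K] [CharZero K] [CommRing A] [Algebra K A]
    (n : ℕ) where
  δ : Fin n → A → A
  ω : Fin n → Fin n → A
  δ_add : ∀ i a b, δ i (a + b) = δ i a + δ i b
  δ_leibniz : ∀ i a b, δ i (a * b) = a * δ i b + b * δ i a
  ω_anti : ∀ i j, ω i j = - ω j i

variable {K A : Type} [Field K] [CharZero K] [CommRing A] [Algebra K A] {n : ℕ}

/-- The scalar `1/2` in `A`. -/
noncomputable def half (K A : Type) [Field K] [CharZero K] [CommRing A] [Algebra K A] : A :=
  algebraMap K A (2⁻¹ : K)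

/-- The deformed product on `A₁ = A ⊕ λA` (a pair `(a₀, a₁)` stands for `a₀ + λ a₁`,
with `λ² = 0`):  `a • b = ab + (λ/2) ω^{ij} δ_i(a) δ_j(b)`, extended `λ`-bilinearly. -/
noncomputable def mul1 (D : DefData K A n) (a b : A × A) : A × A :=
  (a.1 * b.1,
   a.1 * b.2 + a.2 * b.1 + half K A * ∑ i, ∑ j, D.ω i j * D.δ i a.1 * D.δ j b.1)

/-- A module with Leibniz operators: an `A`-module `E` with additive maps `∇_{E,j}`
satisfying `∇_{E,j}(a e) = a ∇_{E,j} e + δ_j(a) e`. -/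
structure LeibMod (D : DefData K A n) (E : Type) [AddCommGroup E] [Module A E] where
  nab : Fin n → E → E
  nab_add : ∀ j e f, nab j (e + f) = nab j e + nab j f
  nab_smul : ∀ j a e, nab j (a • e) = a • nab j e + D.δ j a • e

variable {D : DefData K A n} {E : Type} [AddCommGroup E] [Module A E]

/-- Deformed left action of `A₁` on `E₁ = E ⊕ λE`:
`a • e = a e + (λ/2) ω^{ij} δ_i(a) ∇_{E,j}(e)`, extended `λ`-bilinearly. -/
noncomputable def lact (L : LeibMod D E) (a : A × A) (e : E × E) : E × E :=
  (a.1 • e.1,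
   a.1 • e.2 + a.2 • e.1 + ∑ i, ∑ j, (half K A * D.ω i j * D.δ i a.1) • L.nab j e.1)

/-- Deformed right action of `A₁` on `E₁ = E ⊕ λE`:
`e • a = a e − (λ/2) ω^{ij} δ_i(a) ∇_{E,j}(e)`, extended `λ`-bilinearly. -/
noncomputable def ract (L : LeibMod D E) (e : E × E) (a : A × A) : E × E :=
  (a.1 • e.1,
   a.1 • e.2 + a.2 • e.1 - ∑ i, ∑ j, (half K A * D.ω i j * D.δ i a.1) • L.nab j e.1)

variable {W : Type} [AddCommGroup W] [Module A W]

/-- The natural transformation `q_{V,W}` in the pair representation: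
`q(v ⊗ w) = v ⊗_A w + (λ/2) ω^{ij} ∇_{V,i}(v) ⊗_A ∇_{W,j}(w)`, extended `λ`-bilinearly. -/
noncomputable def qpair (LV : LeibMod D E) (LW : LeibMod D W)
    (v : E × E) (w : W × W) : (E ⊗[A] W) × (E ⊗[A] W) :=
  (v.1 ⊗ₜ[A] w.1,
   v.1 ⊗ₜ[A] w.2 + v.2 ⊗ₜ[A] w.1 +
     ∑ i, ∑ j, (half K A * D.ω i j) • (LV.nab i v.1 ⊗ₜ[A] LW.nab j w.1))

/-- The basis 1-forms `θ^k` of the free module `Ω¹ = Fin n → A`. -/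
noncomputable def theta (k : Fin n) : Fin n → A := Pi.single k 1

/-- `d(a) = δ_k(a) θ^k`. -/
def dfun (D : DefData K A n) (a : A) : Fin n → A := fun k => D.δ k a

/-- The representation (via `q_{Ω¹,E}`) of the quantised connection
`∇_{Q(E)}(e) = q⁻¹(θ^k ⊗ ∇_{E,k}(e)) − (λ/2) ω^{ij} θ^k ⊗ [∇_{E,k},∇_{E,j}] ∇_{E,i}(e)`,
extended `λ`-linearly; i.e. this is `q_{Ω¹,E} ∘ ∇_{Q(E)}`. -/
noncomputable def Nrep (LE : LeibMod D E) (e : E × E) :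
    ((Fin n → A) ⊗[A] E) × ((Fin n → A) ⊗[A] E) :=
  (∑ k, theta k ⊗ₜ[A] LE.nab k e.1,
   ∑ k, theta k ⊗ₜ[A] LE.nab k e.2
     - ∑ i, ∑ j, (half K A * D.ω i j) •
         ∑ k, theta k ⊗ₜ[A]
           (LE.nab k (LE.nab j (LE.nab i e.1)) - LE.nab j (LE.nab k (LE.nab i e.1))))

/-- The representation (via `q_{Ω¹,E}`) of the generalised braiding
`σ_{Q(E)}(e ⊗ ξ) = ξ ⊗ e + λ ω^{ij} ∇_j(ξ) ⊗ ∇_{E,i}(e)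
  + λ ω^{ij} ξ_j θ^k ⊗ [∇_{E,k},∇_{E,i}](e)`, i.e. this is `q_{Ω¹,E} ∘ σ_{Q(E)}`. -/
noncomputable def SigmaRep (LΩ : LeibMod D (Fin n → A)) (LE : LeibMod D E)
    (e : E × E) (ξ : (Fin n → A) × (Fin n → A)) :
    ((Fin n → A) ⊗[A] E) × ((Fin n → A) ⊗[A] E) :=
  qpair LΩ LE ξ e
    + (0,
       ∑ i, ∑ j, D.ω i j • (LΩ.nab j ξ.1 ⊗ₜ[A] LE.nab i e.1)
         + ∑ i, ∑ j, ∑ k, (D.ω i j * ξ.1 j) •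
             (theta k ⊗ₜ[A] (LE.nab k (LE.nab i e.1) - LE.nab i (LE.nab k e.1))))

lemma two_mul_half : (2 : A) * half K A = 1 := by
  rw [half, ← map_ofNat (algebraMap K A) 2, ← map_mul]
  norm_num

lemma half_smul_add_half_smul {M : Type} [AddCommGroup M] [Module A M] (x : M) :
    half K A • x + half K A • x = x := by
  rw [← add_smul, ← two_mul, two_mul_half, one_smul]

abbrev DefData.DerivationsCommute (D : DefData K A n) : Prop :=
  ∀ (i j : Fin n) (a : A), D.δ i (D.δ j a) = D.δ j (D.δ i a)

abbrev DefData.PoissonCompatible (D : DefData K A n) (Γ : Fin n → Fin n → Fin n → A) : Prop :=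
  ∀ i j m : Fin n, D.δ m (D.ω i j) + ∑ k, D.ω k j * Γ i k m + ∑ k, D.ω i k * Γ j k m = 0

abbrev LeibMod.HasChristoffel (LΩ : LeibMod D (Fin n → A)) (Γ : Fin n → Fin n → Fin n → A) :
    Prop :=
  ∀ (j : Fin n) (ξ : Fin n → A) (k : Fin n), LΩ.nab j ξ k = D.δ j (ξ k) - ∑ i, ξ i * Γ i j k

abbrev LeibMod.IsTensorLeibniz (LE : LeibMod D E) (LW : LeibMod D W)
    (LT : LeibMod D (E ⊗[A] W)) : Prop :=
  ∀ (j : Fin n) (x : E) (w : W), LT.nab j (x ⊗ₜ[A] w) = LE.nab j x ⊗ₜ[A] w + x ⊗ₜ[A] LW.nab j w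

namespace DefData

variable (D : DefData K A n)

lemma δ_one (i : Fin n) : D.δ i 1 = 0 := by
  simpa using D.δ_leibniz i 1 1

lemma δ_half (i : Fin n) : D.δ i (half K A) = 0 := by
  have h := D.δ_leibniz i 2 (half K A)
  rw [two_mul_half, δ_one, show (2 : A) = 1 + 1 by norm_num, D.δ_add, δ_one] at h
  linear_combination (-half K A) * h - D.δ i (half K A) * two_mul_half (K := K) (A := A)

variable {M : Type} [AddCommGroup M] [Module A M]

lemma sum_ω_swap (F : Fin n → Fin n → M) :
    ∑ i, ∑ j, D.ω i j • F i j = -∑ i, ∑ j, D.ω i j • F j i := by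
  rw [Finset.sum_comm, ← Finset.sum_neg_distrib]
  refine Finset.sum_congr rfl fun i _ => ?_
  rw [← Finset.sum_neg_distrib]
  refine Finset.sum_congr rfl fun j _ => ?_
  rw [D.ω_anti, neg_smul]

end DefData

lemma DefData.PoissonCompatible.sum_δ_ω_smul {M : Type} [AddCommGroup M] [Module A M]
    {Γ : Fin n → Fin n → Fin n → A} (hpc : D.PoissonCompatible Γ) (m : Fin n)
    (F : Fin n → Fin n → M) :
    ∑ i, ∑ j, D.δ m (D.ω i j) • F i j =
      -∑ i, ∑ j, ∑ k, (D.ω i j * Γ k i m) • F k j -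
        ∑ i, ∑ j, ∑ k, (D.ω i j * Γ k j m) • F i k := by
  have hδω : ∀ i j, D.δ m (D.ω i j) = -∑ k, D.ω k j * Γ i k m - ∑ k, D.ω i k * Γ j k m :=
    fun i j => by linear_combination hpc i j m
  have h₁ : ∑ i, ∑ j, ∑ k, (D.ω i j * Γ k i m) • F k j =
      ∑ i, ∑ j, ∑ k, (D.ω k j * Γ i k m) • F i j :=
    calc _ = ∑ i, ∑ k, ∑ j, (D.ω i j * Γ k i m) • F k j :=
          Finset.sum_congr rfl fun _ _ => Finset.sum_comm
      _ = ∑ k, ∑ i, ∑ j, (D.ω i j * Γ k i m) • F k j := Finset.sum_comm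
      _ = _ := Finset.sum_congr rfl fun _ _ => Finset.sum_comm
  have h₂ : ∑ i, ∑ j, ∑ k, (D.ω i j * Γ k j m) • F i k =
      ∑ i, ∑ j, ∑ k, (D.ω i k * Γ j k m) • F i j :=
    Finset.sum_congr rfl fun _ _ => Finset.sum_comm
  simp only [h₁, h₂, hδω, sub_smul, neg_smul, Finset.sum_smul, Finset.sum_sub_distrib,
    Finset.sum_neg_distrib]

namespace LeibMod

variable {M : Type} [AddCommGroup M] [Module A M] (L : LeibMod D M)

def nabHom (j : Fin n) : M →+ M := AddMonoidHom.mk' (L.nab j) (L.nab_add j)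

lemma nab_zero (j : Fin n) : L.nab j 0 = 0 :=
  map_zero (L.nabHom j)

lemma nab_sub (j : Fin n) (x y : M) : L.nab j (x - y) = L.nab j x - L.nab j y :=
  map_sub (L.nabHom j) x y

lemma nab_sum {ι : Type*} (j : Fin n) (s : Finset ι) (f : ι → M) :
    L.nab j (∑ i ∈ s, f i) = ∑ i ∈ s, L.nab j (f i) :=
  map_sum (L.nabHom j) f s

def curv (k j : Fin n) (x : M) : M := L.nab k (L.nab j x) - L.nab j (L.nab k x)

lemma curv_add (k j : Fin n) (x y : M) :
    L.curv k j (x + y) = L.curv k j x + L.curv k j y := by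
  simp only [curv, nab_add]
  abel

lemma curv_smul (hcomm : D.DerivationsCommute) (k j : Fin n) (a : A) (x : M) :
    L.curv k j (a • x) = a • L.curv k j x := by
  simp only [curv, nab_smul, nab_add, hcomm k j, smul_sub]
  abel

end LeibMod

section Coefficients

variable {M : Type} [AddCommGroup M] [Module A M]

noncomputable def coeffs : (Fin n → A) ⊗[A] M ≃ₗ[A] (Fin n → M) :=
  TensorProduct.comm A _ M ≪≫ₗ TensorProduct.piScalarRight A A M (Fin n)

@[simp] lemma coeffs_tmul (ξ : Fin n → A) (x : M) (m : Fin n) :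
    coeffs (ξ ⊗ₜ[A] x) m = ξ m • x := by
  simp [coeffs]

lemma coeffs_ext {z z' : (Fin n → A) ⊗[A] M} (h : ∀ m, coeffs z m = coeffs z' m) : z = z' :=
  coeffs.injective (funext h)

@[simp] lemma sum_theta_smul (f : Fin n → M) (m : Fin n) :
    ∑ k, (theta k : Fin n → A) m • f k = f m := by
  simp [theta, Pi.single_apply]

end Coefficients

section CoefficientFormulas

variable {LΩ : LeibMod D (Fin n → A)} {LE : LeibMod D E} {LT : LeibMod D ((Fin n → A) ⊗[A] E)}
  (m : Fin n)

lemma coeffs_nab_tmul (hLT : LΩ.IsTensorLeibniz LE LT) (j : Fin n) (ξ : Fin n → A) (x : E) :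
    coeffs (LT.nab j (ξ ⊗ₜ[A] x)) m = LΩ.nab j ξ m • x + ξ m • LE.nab j x := by
  simp [hLT]

lemma coeffs_nab_tensor {Γ : Fin n → Fin n → Fin n → A} (hLΩ : LΩ.HasChristoffel Γ)
    (hLT : LΩ.IsTensorLeibniz LE LT) (j : Fin n) (z : (Fin n → A) ⊗[A] E) :
    coeffs (LT.nab j z) m = LE.nab j (coeffs z m) - ∑ k, Γ k j m • coeffs z k := by
  induction z using TensorProduct.induction_on with
  | zero => simp [LeibMod.nab_zero]
  | tmul ξ x =>
    simp only [coeffs_nab_tmul m hLT, coeffs_tmul, hLΩ, LE.nab_smul, sub_smul, Finset.sum_smul,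
      smul_smul, mul_comm]
    abel
  | add x y hx hy =>
    simp only [LT.nab_add, map_add, Pi.add_apply, hx, hy, LE.nab_add, smul_add,
      Finset.sum_add_distrib]
    abel

@[simp] lemma sigmaRep_fst (e : E × E) (ξ : (Fin n → A) × (Fin n → A)) :
    (SigmaRep LΩ LE e ξ).1 = ξ.1 ⊗ₜ[A] e.1 := by
  simp [SigmaRep, qpair]

lemma coeffs_nrep_fst (e : E × E) : coeffs (Nrep LE e).1 m = LE.nab m e.1 := by
  simp [Nrep]

lemma coeffs_nrep_snd (e : E × E) :
    coeffs (Nrep LE e).2 m =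
      LE.nab m e.2 - ∑ i, ∑ j, (half K A * D.ω i j) • LE.curv m j (LE.nab i e.1) := by
  simp [Nrep, LeibMod.curv]

lemma coeffs_qpair_fst (ξ : (Fin n → A) × (Fin n → A)) (e : E × E) :
    coeffs (qpair LΩ LE ξ e).1 m = ξ.1 m • e.1 :=
  coeffs_tmul _ _ m

lemma coeffs_qpair_snd (ξ : (Fin n → A) × (Fin n → A)) (e : E × E) :
    coeffs (qpair LΩ LE ξ e).2 m = ξ.1 m • e.2 + ξ.2 m • e.1 +
      ∑ i, ∑ j, (half K A * D.ω i j) • (LΩ.nab i ξ.1 m • LE.nab j e.1) := by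
  simp [qpair]

lemma coeffs_lact_snd (a : A × A) (z : ((Fin n → A) ⊗[A] E) × ((Fin n → A) ⊗[A] E)) :
    coeffs (lact LT a z).2 m = a.1 • coeffs z.2 m + a.2 • coeffs z.1 m +
      ∑ i, ∑ j, (half K A * D.ω i j * D.δ i a.1) • coeffs (LT.nab j z.1) m := by
  simp [lact]

lemma coeffs_ract_snd (z : ((Fin n → A) ⊗[A] E) × ((Fin n → A) ⊗[A] E)) (a : A × A) :
    coeffs (ract LT z a).2 m = a.1 • coeffs z.2 m + a.2 • coeffs z.1 m -
      ∑ i, ∑ j, (half K A * D.ω i j * D.δ i a.1) • coeffs (LT.nab j z.1) m := by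
  simp [ract]

lemma coeffs_sigmaRep_snd (e : E × E) (ξ : (Fin n → A) × (Fin n → A)) :
    coeffs (SigmaRep LΩ LE e ξ).2 m = ξ.1 m • e.2 + ξ.2 m • e.1 -
      ∑ i, ∑ j, (half K A * D.ω i j) • (LΩ.nab i ξ.1 m • LE.nab j e.1) +
      ∑ i, ∑ j, (D.ω i j * ξ.1 j) • LE.curv m i e.1 := by
  have hswap := D.sum_ω_swap fun i j => LΩ.nab j ξ.1 m • LE.nab i e.1
  have hhalf : ∑ i, ∑ j, (half K A * D.ω i j) • (LΩ.nab i ξ.1 m • LE.nab j e.1)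
      = half K A • ∑ i, ∑ j, D.ω i j • (LΩ.nab i ξ.1 m • LE.nab j e.1) := by
    simp only [Finset.smul_sum, mul_smul]
  simp only [SigmaRep, qpair, Prod.snd_add, map_add, map_sum, map_smul, Pi.add_apply,
    Finset.sum_apply, Pi.smul_apply, coeffs_tmul, LeibMod.curv]
  simp only [← Finset.smul_sum, sum_theta_smul]
  rw [hhalf, hswap]
  linear_combination (norm := module)
    two_mul_half (K := K) (A := A) • ∑ i, ∑ j, D.ω i j • (LΩ.nab i ξ.1 m • LE.nab j e.1)

end CoefficientFormulas

section Bimodule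

variable {LΩ : LeibMod D (Fin n → A)} {LE : LeibMod D E} {LT : LeibMod D ((Fin n → A) ⊗[A] E)}

theorem sigmaRep_ract_eq_lact (hcomm : D.DerivationsCommute) (e : E × E) (a : A × A)
    (ξ : (Fin n → A) × (Fin n → A)) :
    SigmaRep LΩ LE (ract LE e a) ξ = SigmaRep LΩ LE e (lact LΩ a ξ) := by
  refine Prod.ext (coeffs_ext fun m => ?_) (coeffs_ext fun m => ?_)
  · simp [lact, ract, smul_smul, mul_comm]
  · rw [coeffs_sigmaRep_snd, coeffs_sigmaRep_snd]
    have hswap := D.sum_ω_swap fun i j => (half K A * D.δ i a.1 * LΩ.nab j ξ.1 m) • e.1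
    -- Once the scalars inside the sums are in normal form, the two sides differ by `hswap`.
    simp only [lact, ract, LE.nab_smul, LE.curv_smul hcomm, LΩ.nab_smul] at hswap ⊢
    simp only [Pi.add_apply, Pi.smul_apply, smul_eq_mul, Finset.sum_apply, add_smul, smul_add,
      smul_sub, Finset.sum_smul, Finset.smul_sum, smul_smul, Finset.sum_add_distrib] at hswap ⊢
    simp only [mul_comm, mul_assoc, mul_left_comm] at hswap ⊢
    linear_combination (norm := module) -hswap

theorem sigmaRep_lact (hLT : LΩ.IsTensorLeibniz LE LT) (hcomm : D.DerivationsCommute)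
    (a : A × A) (e : E × E) (ξ : (Fin n → A) × (Fin n → A)) :
    SigmaRep LΩ LE (lact LE a e) ξ = lact LT a (SigmaRep LΩ LE e ξ) := by
  refine Prod.ext (coeffs_ext fun m => ?_) (coeffs_ext fun m => ?_)
  · simp [lact, smul_smul, mul_comm]
  · rw [coeffs_sigmaRep_snd, coeffs_lact_snd, coeffs_sigmaRep_snd, sigmaRep_fst, coeffs_tmul]
    have hswap := D.sum_ω_swap fun i j => (half K A * D.δ i a.1 * LΩ.nab j ξ.1 m) • e.1
    simp only [lact, coeffs_nab_tmul m hLT, LE.nab_smul, LE.curv_smul hcomm] at hswap ⊢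
    simp only [smul_add, smul_sub, Finset.smul_sum, smul_smul, Finset.sum_add_distrib] at hswap ⊢
    simp only [mul_comm, mul_assoc, mul_left_comm] at hswap ⊢
    linear_combination (norm := module) -hswap

theorem sigmaRep_ract (hLT : LΩ.IsTensorLeibniz LE LT) (e : E × E)
    (ξ : (Fin n → A) × (Fin n → A)) (a : A × A) :
    SigmaRep LΩ LE e (ract LΩ ξ a) = ract LT (SigmaRep LΩ LE e ξ) a := by
  refine Prod.ext (coeffs_ext fun m => ?_) (coeffs_ext fun m => ?_)
  · simp [ract, mul_smul]
  · rw [coeffs_sigmaRep_snd, coeffs_ract_snd, coeffs_sigmaRep_snd, sigmaRep_fst, coeffs_tmul]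
    simp only [ract, coeffs_nab_tmul m hLT, LΩ.nab_smul]
    simp only [Pi.add_apply, Pi.sub_apply, Pi.smul_apply, smul_eq_mul, Finset.sum_apply,
      add_smul, sub_smul, smul_add, smul_sub, Finset.sum_smul, Finset.smul_sum, smul_smul,
      Finset.sum_add_distrib]
    simp only [mul_comm, mul_assoc, mul_left_comm]
    abel

end Bimodule

section Leibniz

variable {Γ : Fin n → Fin n → Fin n → A} {LΩ : LeibMod D (Fin n → A)} {LE : LeibMod D E}
  {LT : LeibMod D ((Fin n → A) ⊗[A] E)}

theorem nrep_lact (hLΩ : LΩ.HasChristoffel Γ) (hLT : LΩ.IsTensorLeibniz LE LT)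
    (hcomm : D.DerivationsCommute) (hpc : D.PoissonCompatible Γ) (a : A × A) (e : E × E) :
    Nrep LE (lact LE a e) = qpair LΩ LE (dfun D a.1, dfun D a.2) e + lact LT a (Nrep LE e) := by
  refine Prod.ext (coeffs_ext fun m => ?_) (coeffs_ext fun m => ?_)
  · simp [coeffs_nrep_fst, coeffs_qpair_fst, lact, dfun, LE.nab_smul, add_comm]
  · rw [Prod.snd_add, map_add, Pi.add_apply, coeffs_nrep_snd, coeffs_qpair_snd, coeffs_lact_snd,
      coeffs_nrep_snd, coeffs_nrep_fst]
    have hP := hpc.sum_δ_ω_smul m fun i j => (half K A * D.δ i a.1) • LE.nab j e.1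
    simp only [lact, dfun, coeffs_nab_tensor m hLΩ hLT, coeffs_nrep_fst, hLΩ, LE.nab_add,
      LE.nab_smul, LE.nab_sum, LE.curv_add, LE.curv_smul hcomm, D.δ_leibniz, D.δ_half,
      hcomm m] at hP ⊢
    simp only [add_smul, sub_smul, smul_add, smul_sub, Finset.sum_smul, Finset.smul_sum, smul_smul,
      Finset.sum_add_distrib, Finset.sum_sub_distrib, mul_zero, add_zero, LeibMod.curv] at hP ⊢
    simp only [mul_comm, mul_assoc, mul_left_comm] at hP ⊢
    linear_combination (norm := module) hP

theorem nrep_ract (hLΩ : LΩ.HasChristoffel Γ) (hLT : LΩ.IsTensorLeibniz LE LT)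
    (hcomm : D.DerivationsCommute) (hpc : D.PoissonCompatible Γ) (e : E × E) (a : A × A) :
    Nrep LE (ract LE e a) = ract LT (Nrep LE e) a + SigmaRep LΩ LE e (dfun D a.1, dfun D a.2) := by
  refine Prod.ext (coeffs_ext fun m => ?_) (coeffs_ext fun m => ?_)
  · simp [coeffs_nrep_fst, ract, dfun, LE.nab_smul]
  · rw [Prod.snd_add, map_add, Pi.add_apply, coeffs_nrep_snd, coeffs_sigmaRep_snd, coeffs_ract_snd,
      coeffs_nrep_snd, coeffs_nrep_fst]
    have hP := hpc.sum_δ_ω_smul m fun i j => (half K A * D.δ i a.1) • LE.nab j e.1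
    -- The curvature term of `σ_{Q(E)}(e ⊗ d(a))`, split into halves to meet the `½`-terms.
    have hcurv : ∑ i, ∑ j, D.ω i j • (D.δ j a.1 • LE.curv m i e.1) =
        -(half K A • ∑ i, ∑ j, D.ω i j • (D.δ i a.1 • LE.curv m j e.1) +
          half K A • ∑ i, ∑ j, D.ω i j • (D.δ i a.1 • LE.curv m j e.1)) := by
      rw [D.sum_ω_swap, half_smul_add_half_smul]
    simp only [ract, dfun, coeffs_nab_tensor m hLΩ hLT, coeffs_nrep_fst, hLΩ, LE.nab_add,
      LE.nab_sub, LE.nab_smul, LE.nab_sum, LE.curv_add, LE.curv_smul hcomm, D.δ_leibniz,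
      D.δ_half, hcomm m] at hP hcurv ⊢
    simp only [add_smul, sub_smul, smul_add, smul_sub, Finset.sum_smul, Finset.smul_sum, smul_smul,
      Finset.sum_add_distrib, Finset.sum_sub_distrib, mul_zero, add_zero,
      LeibMod.curv] at hP hcurv ⊢
    simp only [mul_comm, mul_assoc, mul_left_comm] at hP hcurv ⊢
    linear_combination (norm := module) -hP - hcurv

end Leibniz

/-- for `Ω¹` the free module with basis `θ^k`, `∇_j θ^i = −Γ^i_{jk} θ^k`,
commuting derivations and Poisson-compatible `(ω, Γ)`, the quantised connection obeys the
left Leibniz rule `∇_{Q(E)}(a • e) = d(a) ⊗ e + a • ∇_{Q(E)}(e)`, and `σ_{Q(E)}` is an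
`A₁`-bimodule map with `∇_{Q(E)}(e • a) = ∇_{Q(E)}(e) • a + σ_{Q(E)}(e ⊗ d(a))`.
(All identities are transported through the isomorphism `q_{Ω¹,E}`.) -/
theorem statement_5 (D : DefData K A n) (Γ : Fin n → Fin n → Fin n → A)
    {E : Type} [AddCommGroup E] [Module A E]
    (LΩ : LeibMod D (Fin n → A))
    (hLΩ : ∀ (j : Fin n) (ξ : Fin n → A) (k : Fin n),
      LΩ.nab j ξ k = D.δ j (ξ k) - ∑ i, ξ i * Γ i j k)
    (LE : LeibMod D E)
    (LT : LeibMod D ((Fin n → A) ⊗[A] E))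
    (hLT : ∀ (j : Fin n) (ξ : Fin n → A) (e : E),
      LT.nab j (ξ ⊗ₜ[A] e) = LΩ.nab j ξ ⊗ₜ[A] e + ξ ⊗ₜ[A] LE.nab j e)
    (hcomm : ∀ (i j : Fin n) (a : A), D.δ i (D.δ j a) = D.δ j (D.δ i a))
    (hpc : ∀ i j m : Fin n,
      D.δ m (D.ω i j) + ∑ k, D.ω k j * Γ i k m + ∑ k, D.ω i k * Γ j k m = 0) :
    (∀ (a : A × A) (e : E × E),
        Nrep LE (lact LE a e)
          = qpair LΩ LE (dfun D a.1, dfun D a.2) e + lact LT a (Nrep LE e)) ∧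
    (∀ (e : E × E) (a : A × A) (ξ : (Fin n → A) × (Fin n → A)),
        SigmaRep LΩ LE (ract LE e a) ξ = SigmaRep LΩ LE e (lact LΩ a ξ)) ∧
    (∀ (a : A × A) (e : E × E) (ξ : (Fin n → A) × (Fin n → A)),
        SigmaRep LΩ LE (lact LE a e) ξ = lact LT a (SigmaRep LΩ LE e ξ)) ∧
    (∀ (e : E × E) (ξ : (Fin n → A) × (Fin n → A)) (a : A × A),
        SigmaRep LΩ LE e (ract LΩ ξ a) = ract LT (SigmaRep LΩ LE e ξ) a) ∧
    (∀ (e : E × E) (a : A × A),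
        Nrep LE (ract LE e a)
          = ract LT (Nrep LE e) a + SigmaRep LΩ LE e (dfun D a.1, dfun D a.2)) :=
  ⟨nrep_lact hLΩ hLT hcomm hpc, sigmaRep_ract_eq_lact hcomm, sigmaRep_lact hLT hcomm,
    sigmaRep_ract hLT, nrep_ract hLΩ hLT hcomm hpc⟩

end Stmt5
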